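/- Let λ* > 0, g > 0, p₀ < 0 satisfy λ* + g tanh(p₀/√λ*) = 0 and g² > λ*². Define u(q,p) = (1/4)·sinh(2(p-p₀)/√λ*) + A₀·(p-p₀) + A₂·cos(2q)·sinh(2(p-p₀)/√λ*) with A₀ = (λ*/4)·(3g²-λ*²)/((g²-λ*²)(g p₀ + λ*^{3/2})) and A₂ = (3g²-λ*²)/(8λ*²), assuming g p₀ + λ*^{3/2} ≠ 0. Then u satisfies: (i) u_pp + (1/λ*) u_qq = (1/λ*) sinh(2(p-p₀)/√λ*) on (-π,π)×(p₀,0); (ii) u_p(q,0) - (g/λ*^{3/2}) u(q,0) = (1/(4√λ*))·(1/(g²-λ*²))·[3g² + λ*² + (3g² - λ*²) cos(2q)]; (iii) u(q,p₀) = 0. -/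
import Mathlib

theorem second_order_irrotational (lam g p₀ : ℝ) (hlam : 0 < lam) (hg : 0 < g) (hp₀ : p₀ < 0)
    (hdisp : lam + g * Real.tanh (p₀ / Real.sqrt lam) = 0)
    (hgl : lam ^ 2 < g ^ 2)
    (hden : g * p₀ + lam * Real.sqrt lam ≠ 0) :
    let A₀ : ℝ := (lam / 4) * (3 * g ^ 2 - lam ^ 2) /
      ((g ^ 2 - lam ^ 2) * (g * p₀ + lam * Real.sqrt lam))
    let A₂ : ℝ := (3 * g ^ 2 - lam ^ 2) / (8 * lam ^ 2)
    let u : ℝ → ℝ → ℝ := fun q p =>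
      (1 / 4) * Real.sinh (2 * (p - p₀) / Real.sqrt lam) + A₀ * (p - p₀) +
        A₂ * Real.cos (2 * q) * Real.sinh (2 * (p - p₀) / Real.sqrt lam)
    (∀ q ∈ Set.Ioo (-Real.pi) Real.pi, ∀ p ∈ Set.Ioo p₀ (0 : ℝ),
      deriv (deriv (fun p' : ℝ => u q p')) p + (1 / lam) * deriv (deriv (fun q' : ℝ => u q' p)) q
        = (1 / lam) * Real.sinh (2 * (p - p₀) / Real.sqrt lam)) ∧
    (∀ q : ℝ,
      deriv (fun p' : ℝ => u q p') 0 - (g / (lam * Real.sqrt lam)) * u q 0 =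
        (1 / (4 * Real.sqrt lam)) * (1 / (g ^ 2 - lam ^ 2)) *
          (3 * g ^ 2 + lam ^ 2 + (3 * g ^ 2 - lam ^ 2) * Real.cos (2 * q))) ∧
    (∀ q : ℝ, u q p₀ = 0) := by
  intro A₀ A₂ u
  set s := Real.sqrt lam with hsdef
  have hs : 0 < s := Real.sqrt_pos.2 hlam
  have hs2 : s ^ 2 = lam := Real.sq_sqrt hlam.le
  have hu : u = fun q p =>
      (1 / 4) * Real.sinh (2 * (p - p₀) / s) + A₀ * (p - p₀) +
        A₂ * Real.cos (2 * q) * Real.sinh (2 * (p - p₀) / s) := rfl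
  have hA0 : A₀ = (lam / 4) * (3 * g ^ 2 - lam ^ 2) /
      ((g ^ 2 - lam ^ 2) * (g * p₀ + lam * s)) := rfl
  have hA2 : A₂ = (3 * g ^ 2 - lam ^ 2) / (8 * lam ^ 2) := rfl
  have hE : (0:ℝ) < g ^ 2 - lam ^ 2 := by nlinarith
  have hinner : ∀ p : ℝ, HasDerivAt (fun p' : ℝ => 2 * (p' - p₀) / s) (2 * 1 / s) p :=
    fun p => (((hasDerivAt_id p).sub_const p₀).const_mul 2).div_const s
  have hUp : ∀ q p : ℝ, HasDerivAt (fun p' : ℝ => u q p')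
      ((1/4) * (Real.cosh (2 * (p - p₀) / s) * (2 * 1 / s)) + A₀ * 1 +
        (A₂ * Real.cos (2 * q)) * (Real.cosh (2 * (p - p₀) / s) * (2 * 1 / s))) p := by
    intro q p
    rw [hu]
    exact (((hinner p).sinh.const_mul (1/4)).add
      (((hasDerivAt_id p).sub_const p₀).const_mul A₀)).add
      ((hinner p).sinh.const_mul (A₂ * Real.cos (2 * q)))
  refine ⟨?_, ?_, ?_⟩
  · intro q hq p hp
    have e1 : (deriv fun p' : ℝ => u q p') = fun p =>
        (1/4) * (Real.cosh (2 * (p - p₀) / s) * (2 * 1 / s)) + A₀ * 1 +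
        (A₂ * Real.cos (2 * q)) * (Real.cosh (2 * (p - p₀) / s) * (2 * 1 / s)) :=
      funext fun p => (hUp q p).deriv
    have hUpp : HasDerivAt (fun p : ℝ =>
        (1/4) * (Real.cosh (2 * (p - p₀) / s) * (2 * 1 / s)) + A₀ * 1 +
        (A₂ * Real.cos (2 * q)) * (Real.cosh (2 * (p - p₀) / s) * (2 * 1 / s)))
        ((1/4) * ((Real.sinh (2 * (p - p₀) / s) * (2 * 1 / s)) * (2 * 1 / s)) + 0 +
        (A₂ * Real.cos (2 * q)) * ((Real.sinh (2 * (p - p₀) / s) * (2 * 1 / s)) * (2 * 1 / s))) p :=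
      (((((hinner p).cosh.mul_const (2 * 1 / s)).const_mul (1/4)).add
        (hasDerivAt_const p (A₀ * 1))).add
        (((hinner p).cosh.mul_const (2 * 1 / s)).const_mul (A₂ * Real.cos (2 * q))))
    have hQ1 : ∀ q' : ℝ, HasDerivAt (fun q' : ℝ => u q' p)
        (0 + (A₂ * (-Real.sin (2 * q') * (2 * 1))) * Real.sinh (2 * (p - p₀) / s)) q' := by
      intro q'
      rw [hu]
      exact (hasDerivAt_const q' ((1/4) * Real.sinh (2 * (p - p₀) / s) + A₀ * (p - p₀))).add
        (((((hasDerivAt_id q').const_mul 2).cos).const_mul A₂).mul_const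
          (Real.sinh (2 * (p - p₀) / s)))
    have e2 : (deriv fun q' : ℝ => u q' p) = fun q' =>
        0 + (A₂ * (-Real.sin (2 * q') * (2 * 1))) * Real.sinh (2 * (p - p₀) / s) :=
      funext fun q' => (hQ1 q').deriv
    have hQ2 : HasDerivAt (fun q' : ℝ =>
        0 + (A₂ * (-Real.sin (2 * q') * (2 * 1))) * Real.sinh (2 * (p - p₀) / s))
        (0 + (A₂ * (-(Real.cos (2 * q) * (2 * 1)) * (2 * 1))) * Real.sinh (2 * (p - p₀) / s)) q :=
      (hasDerivAt_const q 0).add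
        ((((((hasDerivAt_id q).const_mul 2).sin.neg).mul_const (2 * 1)).const_mul A₂).mul_const
          (Real.sinh (2 * (p - p₀) / s)))
    rw [e1, hUpp.deriv, e2, hQ2.deriv]
    rw [← hs2]
    field_simp
    ring
  · intro q
    rw [(hUp q 0).deriv]
    simp only [hu]
    have hC : (0:ℝ) < Real.cosh (p₀ / s) := Real.cosh_pos _
    have hgS : g * Real.sinh (p₀ / s) = -(lam * Real.cosh (p₀ / s)) := by
      rw [Real.tanh_eq_sinh_div_cosh] at hdisp
      field_simp [hC.ne'] at hdisp
      linarith
    have hC1 : Real.cosh (p₀ / s) ^ 2 - Real.sinh (p₀ / s) ^ 2 = 1 :=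
      Real.cosh_sq_sub_sinh_sq _
    have hC2 : Real.cosh (p₀ / s) ^ 2 * (g ^ 2 - lam ^ 2) = g ^ 2 := by
      have h1 : (g * Real.sinh (p₀ / s)) ^ 2 = (lam * Real.cosh (p₀ / s)) ^ 2 := by
        rw [hgS, neg_sq]
      linear_combination g ^ 2 * hC1 + h1
    have hcosh2 : Real.cosh (2 * (p₀ / s)) * (g ^ 2 - lam ^ 2) = g ^ 2 + lam ^ 2 := by
      rw [Real.cosh_two_mul]
      linear_combination 2 * hC2 - (g ^ 2 - lam ^ 2) * hC1
    have hsinh2 : Real.sinh (2 * (p₀ / s)) * (g ^ 2 - lam ^ 2) = -(2 * lam * g) := by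
      have hg' : g * (Real.sinh (2 * (p₀ / s)) * (g ^ 2 - lam ^ 2)) = g * (-(2 * lam * g)) := by
        rw [Real.sinh_two_mul]
        linear_combination (2 * Real.cosh (p₀ / s) * (g ^ 2 - lam ^ 2)) * hgS - 2 * lam * hC2
      exact mul_left_cancel₀ hg.ne' hg'
    have h1 : Real.cosh (2 * (p₀ / s)) = (g ^ 2 + lam ^ 2) / (g ^ 2 - lam ^ 2) := by
      rw [eq_div_iff hE.ne']; exact hcosh2
    have h2 : Real.sinh (2 * (p₀ / s)) = -(2 * lam * g) / (g ^ 2 - lam ^ 2) := by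
      rw [eq_div_iff hE.ne']; exact hsinh2
    have hY : 2 * ((0:ℝ) - p₀) / s = -(2 * (p₀ / s)) := by ring
    rw [hY, Real.cosh_neg, Real.sinh_neg, h1, h2, hA0, hA2]
    field_simp
    ring
  · intro q
    simp only [hu]
    simp
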